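/- In a flow network where the node balance constraints Σ_{l∈L⁺_n} x_l + Σ_{g∈G⁺_n} y_g = Σ_{l∈L⁻_n} x_l + Σ_{g∈G⁻_n} y_g hold at every node n, if the ground arcs G form a directed path through the nodes (each node has exactly one incoming and one outgoing ground arc in a cyclic order) and the leg-arc values x_l are integers, then all ground-arc values y_g differ from each other by integers; hence if one y_g is an integer, all y_g are integers. -/

import Mathlib

/-- In a time-space network where the ground arcs form a directed cycle through
the nodes, flow conservation with integer leg-arc flows forces all ground-arc
flows to differ by integers; hence if one of them is an integer, all are. -/
theorem stmt_6 {n : ℕ} [NeZero n]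
    (xin xout : Fin n → ℤ) (y : Fin n → ℝ)
    (hbal : ∀ i : Fin n, (xout i : ℝ) + y i = (xin i : ℝ) + y (i - 1)) :
    (∀ i j : Fin n, ∃ k : ℤ, y i - y j = (k : ℝ)) ∧
      ((∃ i : Fin n, ∃ m : ℤ, y i = (m : ℝ)) →
        ∀ j : Fin n, ∃ m : ℤ, y j = (m : ℝ)) := by
  have hstep : ∀ i : Fin n, ∃ k : ℤ, y i - y (i - 1) = (k : ℝ) := by
    intro i
    exact ⟨xin i - xout i, by have := hbal i; push_cast; linarith⟩
  open Fin.NatCast in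
  have hnat : ∀ (m : ℕ) (i : Fin n), ∃ k : ℤ, y i - y (i - (m : Fin n)) = (k : ℝ) := by
    intro m
    induction m with
    | zero => intro i; exact ⟨0, by simp⟩
    | succ m ih =>
      intro i
      obtain ⟨k₁, hk₁⟩ := ih i
      obtain ⟨k₂, hk₂⟩ := hstep (i - (m : Fin n))
      refine ⟨k₁ + k₂, ?_⟩
      have : i - ((m + 1 : ℕ) : Fin n) = i - (m : Fin n) - 1 := by
        push_cast; rw [sub_add_eq_sub_sub]
      rw [this]
      push_cast
      linarith
  have hdiff : ∀ i j : Fin n, ∃ k : ℤ, y i - y j = (k : ℝ) := by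
    intro i j
    obtain ⟨k, hk⟩ := hnat ((i - j).val) i
    refine ⟨k, ?_⟩
    rwa [Fin.cast_val_eq_self, sub_sub_cancel] at hk
  refine ⟨hdiff, ?_⟩
  rintro ⟨i, m, hm⟩ j
  obtain ⟨k, hk⟩ := hdiff j i
  exact ⟨k + m, by push_cast; linarith⟩
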